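/- arXiv:2102.07936 — 6 statements merged into one kernel-verified Lean document; each statement's English description precedes it below -/
import Mathlib

section
/- Let K ≥ 1 and let U_1, …, U_K be finite nonempty action sets. Let (Ω, 𝔽, ℙ) be a probability space, and for each k let Z_k : U_k → (Ω → ℝ) assign to each action an integrable real random variable; set Q_k(u_k) := E[Z_k(u_k)]. Let Ψ : ℝ^K → ℝ and let Φ : (U_1 × ⋯ × U_K) → (Ω → ℝ) assign to each joint action an integrable random variable with E[Φ(u)] = 0 for every joint action u. Define the joint random return Z_jt(u) := Ψ(Q_1(u_1), …, Q_K(u_K)) + Φ(u) (where the first summand is a constant random variable). If the set of maximizers over joint actions u of the map u ↦ Ψ(Q_1(u_1), …, Q_K(u_K)) equals the product over k of the sets of maximizers of Q_k, then the set of maximizers over joint actions u of u ↦ E[Z_jt(u)] equals the product over k of the sets of maximizers of u_k ↦ E[Z_k(u_k)]. (DFAC Theorem: the mean-shape decomposition Z_jt = Ψ + Φ with E[Φ] = 0 guarantees the distributional IGM condition.) -/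
open MeasureTheory

theorem integral_const_add_of_integral_eq_zero {Ω : Type*} [MeasurableSpace Ω] {μ : Measure Ω}
    [IsProbabilityMeasure μ] {f : Ω → ℝ} (hf : Integrable f μ) (hf0 : ∫ ω, f ω ∂μ = 0)
    (c : ℝ) : ∫ ω, c + f ω ∂μ = c := by
  rw [integral_add (integrable_const c) hf, hf0, integral_const, probReal_univ, one_smul,
    add_zero]

theorem dfac_theorem_general {K : ℕ} (U : Fin K → Type*)
    {Ω : Type*} [MeasurableSpace Ω] (ℙ : Measure Ω) [IsProbabilityMeasure ℙ]
    (Z : ∀ k, U k → Ω → ℝ)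
    (Q : ∀ k, U k → ℝ) (hQ : ∀ k u, Q k u = ∫ ω, Z k u ω ∂ℙ)
    (Ψ : (Fin K → ℝ) → ℝ)
    (Φ : (∀ k, U k) → Ω → ℝ) (hΦint : ∀ u, Integrable (Φ u) ℙ)
    (hΦ0 : ∀ u, (∫ ω, Φ u ω ∂ℙ) = 0)
    (Zjt : (∀ k, U k) → Ω → ℝ)
    (hZjt : ∀ u ω, Zjt u ω = Ψ (fun k => Q k (u k)) + Φ u ω)
    (hIGM : {u : ∀ k, U k | ∀ v : ∀ k, U k,
        Ψ (fun k => Q k (v k)) ≤ Ψ (fun k => Q k (u k))}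
      = {u : ∀ k, U k | ∀ k : Fin K, ∀ v : U k, Q k v ≤ Q k (u k)}) :
    {u : ∀ k, U k | ∀ v : ∀ k, U k, (∫ ω, Zjt v ω ∂ℙ) ≤ ∫ ω, Zjt u ω ∂ℙ}
      = {u : ∀ k, U k | ∀ k : Fin K, ∀ v : U k,
          (∫ ω, Z k v ω ∂ℙ) ≤ ∫ ω, Z k (u k) ω ∂ℙ} := by
  have hmean : ∀ u, ∫ ω, Zjt u ω ∂ℙ = Ψ (fun k => Q k (u k)) := fun u => by
    simp only [hZjt]
    exact integral_const_add_of_integral_eq_zero (hΦint u) (hΦ0 u) _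
  simp only [hmean, ← hQ]
  exact hIGM

/-- **DFAC Theorem.** If the factorization function `Ψ` applied to the expected utilities
`Q k` satisfies IGM (its maximizer set is the product of the individual maximizer sets),
then the mean-shape decomposition `Z_jt u = Ψ (Q ∘ u) + Φ u` with `E[Φ u] = 0`
satisfies the Distributional IGM condition. -/
theorem dfac_theorem {K : ℕ} (hK : 1 ≤ K) (U : Fin K → Type*)
    [∀ k, Fintype (U k)] [∀ k, Nonempty (U k)]
    {Ω : Type*} [MeasurableSpace Ω] (ℙ : Measure Ω) [IsProbabilityMeasure ℙ]
    (Z : ∀ k, U k → Ω → ℝ) (hZint : ∀ k u, Integrable (Z k u) ℙ)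
    (Q : ∀ k, U k → ℝ) (hQ : ∀ k u, Q k u = ∫ ω, Z k u ω ∂ℙ)
    (Ψ : (Fin K → ℝ) → ℝ)
    (Φ : (∀ k, U k) → Ω → ℝ) (hΦint : ∀ u, Integrable (Φ u) ℙ)
    (hΦ0 : ∀ u, (∫ ω, Φ u ω ∂ℙ) = 0)
    (Zjt : (∀ k, U k) → Ω → ℝ)
    (hZjt : ∀ u ω, Zjt u ω = Ψ (fun k => Q k (u k)) + Φ u ω)
    (hIGM : {u : ∀ k, U k | ∀ v : ∀ k, U k,
        Ψ (fun k => Q k (v k)) ≤ Ψ (fun k => Q k (u k))}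
      = {u : ∀ k, U k | ∀ k : Fin K, ∀ v : U k, Q k v ≤ Q k (u k)}) :
    {u : ∀ k, U k | ∀ v : ∀ k, U k, (∫ ω, Zjt v ω ∂ℙ) ≤ ∫ ω, Zjt u ω ∂ℙ}
      = {u : ∀ k, U k | ∀ k : Fin K, ∀ v : U k,
          (∫ ω, Z k v ω ∂ℙ) ≤ ∫ ω, Z k (u k) ω ∂ℙ} :=
  dfac_theorem_general U ℙ Z Q hQ Ψ Φ hΦint hΦ0 Zjt hZjt hIGM
end

section
/- Let K ≥ 1 and let U_1, …, U_K be finite nonempty action sets. Let (Ω, 𝔽, ℙ) be a probability space and for each k let Z_k : U_k → (Ω → ℝ) assign to each action an integrable real random variable. Define the DDN joint return Z_jt(u)(ω) := Σ_{k=1}^K Z_k(u_k)(ω). Then the set of maximizers over joint actions u of u ↦ E[Z_jt(u)] equals the product over k of the sets of maximizers of u_k ↦ E[Z_k(u_k)]; i.e., [Z_k] satisfy DIGM for Z_jt. -/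
/-!
By linearity of expectation the expected joint return is a separable sum of the expected
individual utilities. A joint action maximizes such a sum iff each coordinate maximizes its own
summand: changing a single coordinate changes only that summand.
-/

open MeasureTheory

section SeparableSum

variable {ι : Type*} [Fintype ι] [DecidableEq ι] {α : ι → Type*}
  {M : Type*} [AddCommMonoid M] [PartialOrder M] [IsOrderedCancelAddMonoid M]

theorem sum_apply_update_le_sum_iff (g : ∀ i, α i → M) (u : ∀ i, α i) (i : ι) (b : α i) :
    ∑ j, g j (Function.update u i b j) ≤ ∑ j, g j (u j) ↔ g i b ≤ g i (u i) := by
  simp_rw [Function.apply_update (f := g)]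
  rw [Finset.sum_update_of_mem (Finset.mem_univ i),
    ← Finset.add_sum_erase _ _ (Finset.mem_univ i), Finset.sdiff_singleton_eq_erase]
  exact add_le_add_iff_right _

theorem forall_sum_le_sum_iff (g : ∀ i, α i → M) (u : ∀ i, α i) :
    (∀ v : ∀ i, α i, ∑ i, g i (v i) ≤ ∑ i, g i (u i)) ↔ ∀ i, ∀ b : α i, g i b ≤ g i (u i) := by
  refine ⟨fun hmax i b => ?_, fun hmax v => Finset.sum_le_sum fun i _ => hmax i (v i)⟩
  exact (sum_apply_update_le_sum_iff g u i b).1 (hmax _)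

end SeparableSum

theorem ddn_digm_general {K : ℕ} (U : Fin K → Type*)
    {Ω : Type*} [MeasurableSpace Ω] (ℙ : Measure Ω)
    (Z : ∀ k, U k → Ω → ℝ) (hZint : ∀ k u, Integrable (Z k u) ℙ)
    (Zjt : (∀ k, U k) → Ω → ℝ)
    (hZjt : ∀ u ω, Zjt u ω = ∑ k : Fin K, Z k (u k) ω) :
    {u : ∀ k, U k | ∀ v : ∀ k, U k, (∫ ω, Zjt v ω ∂ℙ) ≤ ∫ ω, Zjt u ω ∂ℙ}
      = {u : ∀ k, U k | ∀ k : Fin K, ∀ v : U k,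
          (∫ ω, Z k v ω ∂ℙ) ≤ ∫ ω, Z k (u k) ω ∂ℙ} := by
  have integral_Zjt : ∀ u, ∫ ω, Zjt u ω ∂ℙ = ∑ k, ∫ ω, Z k (u k) ω ∂ℙ := fun u => by
    simp_rw [hZjt]
    exact integral_finsetSum _ fun k _ => hZint k (u k)
  ext u
  simp only [Set.mem_ofPred_eq, integral_Zjt]
  exact forall_sum_le_sum_iff (fun k a => ∫ ω, Z k a ω ∂ℙ) u

/-- **DDN satisfies DIGM.** For integrable random utilities `Z k`, the additive joint
return `Z_jt u = ∑ k, Z k (u k)` has the property that the maximizers of its expectation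
form exactly the product of the maximizer sets of the individual expected utilities. -/
theorem ddn_digm {K : ℕ} (hK : 1 ≤ K) (U : Fin K → Type*)
    [∀ k, Fintype (U k)] [∀ k, Nonempty (U k)]
    {Ω : Type*} [MeasurableSpace Ω] (ℙ : Measure Ω) [IsProbabilityMeasure ℙ]
    (Z : ∀ k, U k → Ω → ℝ) (hZint : ∀ k u, Integrable (Z k u) ℙ)
    (Zjt : (∀ k, U k) → Ω → ℝ)
    (hZjt : ∀ u ω, Zjt u ω = ∑ k : Fin K, Z k (u k) ω) :
    {u : ∀ k, U k | ∀ v : ∀ k, U k, (∫ ω, Zjt v ω ∂ℙ) ≤ ∫ ω, Zjt u ω ∂ℙ}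
      = {u : ∀ k, U k | ∀ k : Fin K, ∀ v : U k,
          (∫ ω, Z k v ω ∂ℙ) ≤ ∫ ω, Z k (u k) ω ∂ℙ} :=
  ddn_digm_general U ℙ Z hZint Zjt hZjt
end

section
/- Let K ≥ 1 and let U_1, …, U_K be finite nonempty action sets. Let (Ω, 𝔽, ℙ) be a probability space, for each k let Z_k : U_k → (Ω → ℝ) assign to each action an integrable real random variable, and set Q_k(u_k) := E[Z_k(u_k)]. Let M : ℝ^K → ℝ be strictly increasing in each coordinate (for each k, x ↦ M(…, x, …) is strictly monotone increasing when the other coordinates are fixed). Define the DMIX joint return Z_jt(u) := M(Q_1(u_1), …, Q_K(u_K)) + Σ_{k=1}^K (Z_k(u_k) − Q_k(u_k)). Then the set of maximizers over joint actions u of u ↦ E[Z_jt(u)] equals the product over k of the sets of maximizers of u_k ↦ E[Z_k(u_k)]; i.e., [Z_k] satisfy DIGM for Z_jt. -/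
/-! Since the shape terms `Z k (u k) - Q k (u k)` have mean zero, the expected DMIX return is
`M (Q ∘ u)`. A mixing function that is strictly increasing in each coordinate is monotone, so it
is maximized at any product of individual maximizers; conversely, if `u` maximizes `M (Q ∘ u)`,
changing the single action `u k` to `v` cannot increase `M`, so strictness in coordinate `k`
gives `Q k v ≤ Q k (u k)`. -/

open MeasureTheory Function

/-- Individual-Global-Max. -/
def IsIGM {ι α β : Type*} {U : ι → Type*} [LE α] [LE β] (Qjt : (∀ i, U i) → β)
    (Q : ∀ i, U i → α) : Prop :=
  {u | ∀ v, Qjt v ≤ Qjt u} = {u | ∀ i v, Q i v ≤ Q i (u i)}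

theorem monotone_of_monotone_update {ι α β : Type*} [Fintype ι] [DecidableEq ι] [Preorder α]
    [Preorder β] {M : (ι → α) → β} (hM : ∀ i x, Monotone fun y => M (update x i y)) :
    Monotone M := by
  intro a b hab
  have hpiecewise : ∀ s : Finset ι, M a ≤ M (s.piecewise b a) := by
    intro s
    induction s using Finset.induction_on with
    | empty => simp
    | @insert i s hi ih =>
      have hself : update (s.piecewise b a) i (a i) = s.piecewise b a := by
        rw [← Finset.piecewise_eq_of_notMem s b a hi, update_eq_self]
      rw [Finset.piecewise_insert]
      calc M a ≤ M (s.piecewise b a) := ih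
        _ = M (update (s.piecewise b a) i (a i)) := by rw [hself]
        _ ≤ M (update (s.piecewise b a) i (b i)) := hM i _ (hab i)
  simpa using hpiecewise Finset.univ

theorem isIGM_comp_of_strictMono_update {ι α β : Type*} {U : ι → Type*} [Fintype ι]
    [DecidableEq ι] [LinearOrder α] [Preorder β] {M : (ι → α) → β}
    (hM : ∀ i x, StrictMono fun y => M (update x i y)) (Q : ∀ i, U i → α) :
    IsIGM (fun u => M fun i => Q i (u i)) Q := by
  ext u
  constructor
  · intro hmax i v
    have hle : M (update (fun j => Q j (u j)) i (Q i v))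
        ≤ M (update (fun j => Q j (u j)) i (Q i (u i))) := by
      rw [update_eq_self, ← funext (apply_update (fun j => Q j) u i v)]
      exact hmax (update u i v)
    exact (hM i _).le_iff_le.mp hle
  · intro hind v
    exact monotone_of_monotone_update (fun i x => (hM i x).monotone) fun i => hind i (v i)

theorem integral_const_add_sum_sub_integral {Ω ι : Type*} [MeasurableSpace Ω] (μ : Measure Ω)
    [IsProbabilityMeasure μ] (s : Finset ι) {X : ι → Ω → ℝ}
    (hX : ∀ i ∈ s, Integrable (X i) μ) (c : ℝ) :
    ∫ ω, c + ∑ i ∈ s, (X i ω - ∫ ω', X i ω' ∂μ) ∂μ = c := by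
  have hcentered : ∀ i ∈ s, Integrable (fun ω => X i ω - ∫ ω', X i ω' ∂μ) μ :=
    fun i hi => (hX i hi).sub (integrable_const _)
  have hmean_zero : ∀ i ∈ s, ∫ ω, (X i ω - ∫ ω', X i ω' ∂μ) ∂μ = 0 := by
    intro i hi
    rw [integral_sub (hX i hi) (integrable_const _), integral_const]
    simp
  rw [integral_add (integrable_const _) (integrable_finsetSum _ hcentered),
    integral_finsetSum _ hcentered, Finset.sum_eq_zero hmean_zero]
  simp

theorem dmix_digm_general {K : ℕ} (U : Fin K → Type*)
    {Ω : Type*} [MeasurableSpace Ω] (ℙ : Measure Ω) [IsProbabilityMeasure ℙ]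
    (Z : ∀ k, U k → Ω → ℝ) (hZint : ∀ k u, Integrable (Z k u) ℙ)
    (Q : ∀ k, U k → ℝ) (hQ : ∀ k u, Q k u = ∫ ω, Z k u ω ∂ℙ)
    (M : (Fin K → ℝ) → ℝ)
    (hM : ∀ (k : Fin K) (x : Fin K → ℝ),
      StrictMono (fun y : ℝ => M (Function.update x k y)))
    (Zjt : (∀ k, U k) → Ω → ℝ)
    (hZjt : ∀ u ω, Zjt u ω
      = M (fun k => Q k (u k)) + ∑ k : Fin K, (Z k (u k) ω - Q k (u k))) :
    {u : ∀ k, U k | ∀ v : ∀ k, U k, (∫ ω, Zjt v ω ∂ℙ) ≤ ∫ ω, Zjt u ω ∂ℙ}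
      = {u : ∀ k, U k | ∀ k : Fin K, ∀ v : U k,
          (∫ ω, Z k v ω ∂ℙ) ≤ ∫ ω, Z k (u k) ω ∂ℙ} := by
  obtain rfl : Q = fun k u => ∫ ω, Z k u ω ∂ℙ := funext₂ hQ
  have hmean : ∀ u, ∫ ω, Zjt u ω ∂ℙ = M fun k => ∫ ω, Z k (u k) ω ∂ℙ := fun u => by
    simp_rw [hZjt u]
    exact integral_const_add_sum_sub_integral ℙ _ (fun k _ => hZint k (u k)) _
  simp_rw [hmean]
  exact isIGM_comp_of_strictMono_update hM fun k v => ∫ ω, Z k v ω ∂ℙ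

/-- **DMIX satisfies DIGM.** For integrable random utilities `Z k` with means `Q k`, and a
mixing function `M` strictly increasing in each coordinate, the DMIX joint return
`Z_jt u = M (Q ∘ u) + ∑ k, (Z k (u k) - Q k (u k))` has the property that the maximizers
of its expectation form exactly the product of the maximizer sets of the individual
expected utilities. -/
theorem dmix_digm {K : ℕ} (hK : 1 ≤ K) (U : Fin K → Type*)
    [∀ k, Fintype (U k)] [∀ k, Nonempty (U k)]
    {Ω : Type*} [MeasurableSpace Ω] (ℙ : Measure Ω) [IsProbabilityMeasure ℙ]
    (Z : ∀ k, U k → Ω → ℝ) (hZint : ∀ k u, Integrable (Z k u) ℙ)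
    (Q : ∀ k, U k → ℝ) (hQ : ∀ k u, Q k u = ∫ ω, Z k u ω ∂ℙ)
    (M : (Fin K → ℝ) → ℝ)
    (hM : ∀ (k : Fin K) (x : Fin K → ℝ),
      StrictMono (fun y : ℝ => M (Function.update x k y)))
    (Zjt : (∀ k, U k) → Ω → ℝ)
    (hZjt : ∀ u ω, Zjt u ω
      = M (fun k => Q k (u k)) + ∑ k : Fin K, (Z k (u k) ω - Q k (u k))) :
    {u : ∀ k, U k | ∀ v : ∀ k, U k, (∫ ω, Zjt v ω ∂ℙ) ≤ ∫ ω, Zjt u ω ∂ℙ}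
      = {u : ∀ k, U k | ∀ k : Fin K, ∀ v : U k,
          (∫ ω, Z k v ω ∂ℙ) ≤ ∫ ω, Z k (u k) ω ∂ℙ} :=
  dmix_digm_general U ℙ Z hZint Q hQ M hM Zjt hZjt
end

section
/- There exist a probability space (Ω, 𝔽, ℙ), two finite nonempty action sets U_1 and U_2, integrable random utilities Z_1 : U_1 → (Ω → ℝ) and Z_2 : U_2 → (Ω → ℝ) with expected utilities Q_k(u_k) := E[Z_k(u_k)], and a function Ψ : ℝ² → ℝ strictly increasing in each coordinate, such that: (i) the set of maximizers over joint actions (u_1, u_2) of Ψ(Q_1(u_1), Q_2(u_2)) equals the product of the sets of maximizers of Q_1 and of Q_2 (so IGM holds for the deterministic factorization by Ψ), yet (ii) the set of maximizers over joint actions (u_1, u_2) of E[Ψ(Z_1(u_1), Z_2(u_2))] is NOT equal to the product of the sets of maximizers of Q_1 and of Q_2 (so the naive distributional factorization Z_jt(u) := Ψ(Z_1(u_1), Z_2(u_2)) fails DIGM). In other words, replacing deterministic utilities by random utilities inside a factorization function that satisfies IGM is insufficient to guarantee DIGM. -/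
/-!
Expectation does not commute with a nonlinear `Ψ`. Take `Ψ x y = x + y ^ 3` and let the second
agent choose between the constant utility `0` and a utility `Z` equal to `1` with probability
`1/5` and to `-1/2` otherwise (the identity of `ℝ` under `Ber(1, -1/2, 1/5)`). Then `E[Z] = -1/5 < 0`, so the expected utilities single out
the safe action, while the cube rewards the right skew of `Z`: `E[Z ^ 3] = 1/10 > 0`, so the
naive distributional factorization prefers the risky one.
-/

open MeasureTheory

section Maximizers

variable {ι κ α β γ : Type*}

def maximizers [Preorder α] (f : ι → α) : Set ι := {u | ∀ v, f v ≤ f u}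

theorem maximizers_comp_eq_prod [LinearOrder α] [LinearOrder β] [Preorder γ] {Ψ : α → β → γ}
    (hΨ₁ : ∀ y, StrictMono (Ψ · y)) (hΨ₂ : ∀ x, StrictMono (Ψ x)) (f : ι → α) (g : κ → β) :
    maximizers (fun u : ι × κ => Ψ (f u.1) (g u.2)) = maximizers f ×ˢ maximizers g := by
  ext ⟨u₁, u₂⟩
  constructor
  · intro hu
    refine ⟨fun v₁ => not_lt.1 fun hlt => ?_, fun v₂ => not_lt.1 fun hlt => ?_⟩
    · exact (hu (v₁, u₂)).not_gt (hΨ₁ _ hlt)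
    · exact (hu (u₁, v₂)).not_gt (hΨ₂ _ hlt)
  · rintro ⟨hu₁, hu₂⟩ ⟨v₁, v₂⟩
    exact ((hΨ₁ _).monotone (hu₁ v₁)).trans ((hΨ₂ _).monotone (hu₂ v₂))

end Maximizers

section SkewCoin

open ProbabilityTheory

noncomputable abbrev skewCoin : Measure ℝ := Ber(1, -1 / 2, ⟨1 / 5, by norm_num, by norm_num⟩)

theorem integrable_skewCoin (f : ℝ → ℝ) : Integrable f skewCoin :=
  integrable_bernoulliMeasure _ _ _ f

theorem integral_skewCoin (f : ℝ → ℝ) : ∫ x, f x ∂skewCoin = f 1 / 5 + 4 * f (-1 / 2) / 5 := by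
  rw [integral_bernoulliMeasure]
  norm_num
  ring

end SkewCoin

/-- **Naive distributional factorization can fail DIGM.** There exist a probability space,
two finite nonempty action sets, integrable random utilities `Z1, Z2`, and a function
`Ψ : ℝ → ℝ → ℝ` strictly increasing in each coordinate, such that IGM holds for the
deterministic factorization `(u1, u2) ↦ Ψ (Q1 u1) (Q2 u2)` of the expected utilities,
yet DIGM fails for the naive distributional factorization
`(u1, u2) ↦ (ω ↦ Ψ (Z1 u1 ω) (Z2 u2 ω))`. -/
theorem naive_distributional_factorization_fails_digm :
    ∃ (Ω : Type) (mΩ : MeasurableSpace Ω) (ℙ : Measure Ω)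
      (_ : IsProbabilityMeasure ℙ)
      (U₁ U₂ : Type) (_ : Fintype U₁) (_ : Fintype U₂)
      (_ : Nonempty U₁) (_ : Nonempty U₂)
      (Z₁ : U₁ → Ω → ℝ) (Z₂ : U₂ → Ω → ℝ) (Ψ : ℝ → ℝ → ℝ),
      (∀ u₁, Integrable (Z₁ u₁) ℙ) ∧
      (∀ u₂, Integrable (Z₂ u₂) ℙ) ∧
      (∀ y : ℝ, StrictMono (fun x : ℝ => Ψ x y)) ∧
      (∀ x : ℝ, StrictMono (fun y : ℝ => Ψ x y)) ∧
      ({u : U₁ × U₂ | ∀ v : U₁ × U₂,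
          Ψ (∫ ω, Z₁ v.1 ω ∂ℙ) (∫ ω, Z₂ v.2 ω ∂ℙ)
            ≤ Ψ (∫ ω, Z₁ u.1 ω ∂ℙ) (∫ ω, Z₂ u.2 ω ∂ℙ)}
        = {u : U₁ × U₂ |
            (∀ v₁ : U₁, (∫ ω, Z₁ v₁ ω ∂ℙ) ≤ ∫ ω, Z₁ u.1 ω ∂ℙ) ∧
            (∀ v₂ : U₂, (∫ ω, Z₂ v₂ ω ∂ℙ) ≤ ∫ ω, Z₂ u.2 ω ∂ℙ)}) ∧
      ({u : U₁ × U₂ | ∀ v : U₁ × U₂,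
          (∫ ω, Ψ (Z₁ v.1 ω) (Z₂ v.2 ω) ∂ℙ) ≤ ∫ ω, Ψ (Z₁ u.1 ω) (Z₂ u.2 ω) ∂ℙ}
        ≠ {u : U₁ × U₂ |
            (∀ v₁ : U₁, (∫ ω, Z₁ v₁ ω ∂ℙ) ≤ ∫ ω, Z₁ u.1 ω ∂ℙ) ∧
            (∀ v₂ : U₂, (∫ ω, Z₂ v₂ ω ∂ℙ) ≤ ∫ ω, Z₂ u.2 ω ∂ℙ)}) := by
  have hΨ₁ (y : ℝ) : StrictMono fun x : ℝ => x + y ^ 3 := strictMono_id.add_const _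
  have hΨ₂ (x : ℝ) : StrictMono fun y : ℝ => x + y ^ 3 :=
    (Odd.strictMono_pow (by decide)).const_add x
  refine ⟨ℝ, _, skewCoin, inferInstance, Unit, Bool, inferInstance, inferInstance,
    inferInstance, inferInstance, fun _ _ => 0, fun safe ω => if safe then 0 else ω,
    fun x y => x + y ^ 3, fun _ => integrable_const 0, fun _ => integrable_skewCoin _, hΨ₁, hΨ₂,
    maximizers_comp_eq_prod hΨ₁ hΨ₂ (fun _ => ∫ _, 0 ∂skewCoin)
      fun safe : Bool => ∫ ω, (if safe then 0 else ω) ∂skewCoin,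
    (ne_of_mem_of_not_mem' (a := ((), true)) ?safe_maximizes_means ?_).symm⟩
  case safe_maximizes_means =>
    refine ⟨fun _ => le_rfl, fun v => ?_⟩
    cases v <;> norm_num [integral_skewCoin]
  intro h
  have hsafe_beats_risky := h ((), false)
  norm_num [integral_skewCoin] at hsafe_beats_risky
end

section
/- Let K ≥ 1, let μ_1, …, μ_K be probability measures on ℝ with quantile functions f_1, …, f_K, and let β_1, …, β_K be nonnegative real numbers. Then there exist a probability space (Ω, 𝔽, ℙ) and random variables Z_1, …, Z_K : Ω → ℝ such that the law of Z_k is μ_k for each k, and the quantile function of the law of the random variable Z := Σ_{k=1}^K β_k Z_k agrees on (0,1) with the quantile mixture ω ↦ Σ_{k=1}^K β_k f_k(ω). (A quantile mixture with nonnegative coefficients corresponds to a nonnegatively weighted sum of random variables with the given component distributions.) -/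
open MeasureTheory

/-- The cumulative distribution function of a measure on `ℝ`: `F_μ(x) = μ (-∞, x]`. -/
noncomputable def cdfOf (μ : Measure ℝ) (x : ℝ) : ℝ :=
  (μ (Set.Iic x)).toReal

/-- The quantile function (generalized inverse CDF) of a measure on `ℝ`:
`f_μ(ω) = inf {x | ω ≤ F_μ(x)}`. -/
noncomputable def quantile (μ : Measure ℝ) (ω : ℝ) : ℝ :=
  sInf {x : ℝ | ω ≤ cdfOf μ x}

/-!
Take `U` uniform on `(0,1)` and `Z k = f_k(U)`. If `g` is nondecreasing on `(0,1)` and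
left-continuous at `ω`, then `g ω ≤ x ↔ ω ≤ ℙ(g(U) ≤ x)`, so the quantile function of the law
of `g(U)` is `g` at `ω`. Quantile functions are nondecreasing and left-continuous on `(0,1)`,
and both properties survive nonnegative linear combinations; this gives the quantile of
`∑ β_k Z_k`, and, since a probability measure is determined by its quantile function, also
the law of each `Z k`.
-/

section

open ProbabilityTheory Set Filter Topology

lemma quantile_eq_of_forall_le_iff {μ : Measure ℝ} {ω y : ℝ}
    (h : ∀ x, y ≤ x ↔ ω ≤ cdfOf μ x) : quantile μ ω = y := by
  have hset : {x | ω ≤ cdfOf μ x} = Ici y := by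
    ext x
    exact (h x).symm
  rw [quantile, hset, csInf_Ici]

section Quantile

variable (μ : Measure ℝ) [IsProbabilityMeasure μ]

lemma cdfOf_eq_cdf : cdfOf μ = cdf μ :=
  funext fun x => (cdf_eq_real μ x).symm

lemma quantile_le_iff {ω x : ℝ} (hω : ω ∈ Ioo 0 1) : quantile μ ω ≤ x ↔ ω ≤ cdf μ x := by
  rw [quantile, cdfOf_eq_cdf]
  have hbdd : BddBelow {x | ω ≤ cdf μ x} := by
    obtain ⟨a, ha⟩ := ((tendsto_cdf_atBot μ).eventually (eventually_lt_nhds hω.1)).exists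
    exact ⟨a, fun t ht => le_of_not_gt fun hta => (ht.trans (monotone_cdf μ hta.le)).not_gt ha⟩
  have hne : {x | ω ≤ cdf μ x}.Nonempty :=
    ((tendsto_cdf_atTop μ).eventually (eventually_ge_nhds hω.2)).exists
  refine ⟨fun h => ?_, fun h => csInf_le hbdd h⟩
  refine ge_of_tendsto ((cdf μ).right_continuous x |>.mono_left
    (nhdsWithin_mono x Ioi_subset_Ici_self)) ?_
  filter_upwards [self_mem_nhdsWithin] with y hy
  obtain ⟨t, ht, hty⟩ := (csInf_lt_iff hbdd hne).1 (h.trans_lt hy)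
  exact ht.trans (monotone_cdf μ hty.le)

lemma monotoneOn_quantile : MonotoneOn (quantile μ) (Ioo 0 1) :=
  fun _ ha _ hb hab => (quantile_le_iff μ ha).2 (hab.trans ((quantile_le_iff μ hb).1 le_rfl))

lemma continuousWithinAt_quantile_Iio {ω : ℝ} (hω : ω ∈ Ioo 0 1) :
    ContinuousWithinAt (quantile μ) (Iio ω) ω := by
  refine tendsto_order.2 ⟨fun a ha => ?_, fun b hb => ?_⟩
  · obtain ⟨ω', hω', haω'⟩ : ∃ ω' ∈ Ioo 0 ω, a < quantile μ ω' := by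
      by_contra! h
      have hle : ω ≤ cdf μ a := le_of_forall_lt_imp_le_of_dense fun ω' hω' => by
        rcases le_or_gt ω' 0 with h0 | h0
        · exact h0.trans (cdf_nonneg μ a)
        · exact (quantile_le_iff μ ⟨h0, hω'.trans hω.2⟩).1 (h ω' ⟨h0, hω'⟩)
      exact ((quantile_le_iff μ hω).2 hle).not_gt ha
    filter_upwards [Ioo_mem_nhdsLT hω'.2] with u hu
    exact haω'.trans_le
      (monotoneOn_quantile μ ⟨hω'.1, hω'.2.trans hω.2⟩ ⟨hω'.1.trans hu.1, hu.2.trans hω.2⟩ hu.1.le)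
  · filter_upwards [Ioo_mem_nhdsLT hω.1] with u hu
    exact (monotoneOn_quantile μ ⟨hu.1, hu.2.trans hω.2⟩ hω hu.2.le).trans_lt hb

lemma measurable_quantile_comp {α : Type*} [MeasurableSpace α] {c : α → ℝ} (hc : Measurable c)
    (hc01 : ∀ u, c u ∈ Ioo 0 1) : Measurable fun u => quantile μ (c u) := by
  refine measurable_of_Iic fun x => ?_
  have hpre : (fun u => quantile μ (c u)) ⁻¹' Iic x = c ⁻¹' Iic (cdf μ x) := by
    ext u
    exact quantile_le_iff μ (hc01 u)
  rw [hpre]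
  exact hc measurableSet_Iic

lemma cdf_le_cdf_of_quantile_le (ν : Measure ℝ) [IsProbabilityMeasure ν]
    (h : ∀ ω ∈ Ioo 0 1, quantile ν ω ≤ quantile μ ω) (x : ℝ) : cdf μ x ≤ cdf ν x := by
  refine le_of_forall_lt_imp_le_of_dense fun ω hω => ?_
  rcases le_or_gt ω 0 with h0 | h0
  · exact h0.trans (cdf_nonneg ν x)
  have hω01 : ω ∈ Ioo 0 1 := ⟨h0, hω.trans_le (cdf_le_one μ x)⟩
  exact (quantile_le_iff ν hω01).1 ((h ω hω01).trans ((quantile_le_iff μ hω01).2 hω.le))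

lemma eq_of_quantile_eq (ν : Measure ℝ) [IsProbabilityMeasure ν]
    (h : ∀ ω ∈ Ioo 0 1, quantile μ ω = quantile ν ω) : μ = ν :=
  Measure.eq_of_cdf μ ν <| StieltjesFunction.ext fun x =>
    le_antisymm (cdf_le_cdf_of_quantile_le μ ν (fun ω hω => (h ω hω).ge) x)
      (cdf_le_cdf_of_quantile_le ν μ (fun ω hω => (h ω hω).le) x)

end Quantile

instance : IsProbabilityMeasure (volume.restrict (Ioo (0 : ℝ) 1)) :=
  ⟨by simp [Real.volume_Ioo]⟩

theorem quantile_map_restrict_Ioo {g f : ℝ → ℝ} (hg : Measurable g) (hgf : EqOn g f (Ioo 0 1))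
    (hf : MonotoneOn f (Ioo 0 1)) {ω : ℝ} (hω : ω ∈ Ioo 0 1)
    (hfω : ContinuousWithinAt f (Iio ω) ω) :
    quantile ((volume.restrict (Ioo 0 1)).map g) ω = f ω := by
  set ν := (volume.restrict (Ioo (0 : ℝ) 1)).map g
  have hν : ∀ x, ν (Iic x) = volume (g ⁻¹' Iic x ∩ Ioo 0 1) := fun x => by
    rw [Measure.map_apply hg measurableSet_Iic, Measure.restrict_apply (hg measurableSet_Iic)]
  refine quantile_eq_of_forall_le_iff fun x => ⟨fun hx => ?_, fun hx => ?_⟩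
  · have hsub : Ioc 0 ω ⊆ g ⁻¹' Iic x ∩ Ioo 0 1 := fun u hu => by
      have hu01 : u ∈ Ioo 0 1 := ⟨hu.1, hu.2.trans_lt hω.2⟩
      exact ⟨(hgf hu01).trans_le ((hf hu01 hω hu.2).trans hx), hu01⟩
    calc ω = (volume (Ioc 0 ω)).toReal := by simp [hω.1.le]
      _ ≤ cdfOf ν x := ENNReal.toReal_mono (measure_ne_top ν _) (hν x ▸ measure_mono hsub)
  · by_contra! hxω
    obtain ⟨ω', hω', hxω'⟩ : ∃ ω' ∈ Ioo 0 ω, x < f ω' :=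
      ((eventually_mem_set.2 (Ioo_mem_nhdsLT hω.1)).and
        (hfω.eventually (eventually_gt_nhds hxω))).exists
    have hsub : g ⁻¹' Iic x ∩ Ioo 0 1 ⊆ Ioo 0 ω' := fun u ⟨hu, hu01⟩ => by
      refine ⟨hu01.1, lt_of_not_ge fun hωu => ?_⟩
      have hfu : f ω' ≤ f u := hf ⟨hω'.1, hω'.2.trans hω.2⟩ hu01 hωu
      exact (hxω'.trans_le hfu).not_ge ((hgf hu01).symm.trans_le hu)
    have hle : cdfOf ν x ≤ ω' :=
      calc cdfOf ν x ≤ (volume (Ioo 0 ω')).toReal :=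
            ENNReal.toReal_mono (by simp) (hν x ▸ measure_mono hsub)
        _ = ω' := by simp [hω'.1.le]
    linarith [hω'.2]

end

theorem quantile_mixture_is_sum_of_rvs_general {K : ℕ}
    (μ : Fin K → Measure ℝ) [∀ k, IsProbabilityMeasure (μ k)]
    (β : Fin K → ℝ) (hβ : ∀ k, 0 ≤ β k) :
    ∃ (Ω : Type) (mΩ : MeasurableSpace Ω) (ℙ : Measure Ω)
      (_ : IsProbabilityMeasure ℙ) (Z : Fin K → Ω → ℝ),
      (∀ k, Measurable (Z k)) ∧
      (∀ k, Measure.map (Z k) ℙ = μ k) ∧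
      (∀ ω ∈ Set.Ioo (0 : ℝ) 1,
        quantile (Measure.map (fun x => ∑ k : Fin K, β k * Z k x) ℙ) ω
          = ∑ k : Fin K, β k * quantile (μ k) ω) := by
  -- `c` folds `ℝ` into `(0,1)` so that `Z k` is measurable everywhere; it is the identity where
  -- the uniform measure lives.
  set c : ℝ → ℝ := fun u => if u ∈ Set.Ioo 0 1 then u else 2⁻¹
  have hc : ∀ u ∈ Set.Ioo (0 : ℝ) 1, c u = u := fun u hu => if_pos hu
  have hc01 : ∀ u, c u ∈ Set.Ioo 0 1 := fun u => by
    by_cases hu : u ∈ Set.Ioo 0 1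
    · rwa [hc u hu]
    · simp only [c, if_neg hu]
      norm_num
  set Z : Fin K → ℝ → ℝ := fun k u => quantile (μ k) (c u)
  have hZ : ∀ k, Set.EqOn (Z k) (quantile (μ k)) (Set.Ioo 0 1) := fun k u hu =>
    congrArg (quantile (μ k)) (hc u hu)
  have hZ_meas : ∀ k, Measurable (Z k) := fun k =>
    measurable_quantile_comp (μ k) (measurable_id.ite measurableSet_Ioo measurable_const) hc01
  refine ⟨ℝ, inferInstance, volume.restrict (Set.Ioo 0 1), inferInstance, Z, hZ_meas,
    fun k => ?_, fun ω hω => ?_⟩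
  · have := Measure.isProbabilityMeasure_map (μ := volume.restrict (Set.Ioo (0 : ℝ) 1))
      (hZ_meas k).aemeasurable
    exact eq_of_quantile_eq _ _ fun ω hω => quantile_map_restrict_Ioo (hZ_meas k) (hZ k)
      (monotoneOn_quantile _) hω (continuousWithinAt_quantile_Iio _ hω)
  · have hmono : MonotoneOn (fun u => ∑ k, β k * quantile (μ k) u) (Set.Ioo 0 1) :=
      fun u hu v hv huv => Finset.sum_le_sum fun k _ =>
        mul_le_mul_of_nonneg_left (monotoneOn_quantile _ hu hv huv) (hβ k)
    have hcont : ContinuousWithinAt (fun u => ∑ k, β k * quantile (μ k) u) (Set.Iio ω) ω :=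
      tendsto_finsetSum _ fun k _ => (continuousWithinAt_quantile_Iio _ hω).const_mul _
    exact quantile_map_restrict_Ioo (Finset.measurable_sum _ fun k _ => (hZ_meas k).const_mul _)
      (fun u hu => Finset.sum_congr rfl fun k _ => by rw [hZ k hu]) hmono hω hcont

/-- **Quantile mixtures correspond to nonnegatively weighted sums of random variables.**
Given probability measures `μ k` with quantile functions `f k` and nonnegative weights
`β k`, there exist a probability space and random variables `Z k` with laws `μ k` such
that the quantile function of the law of `∑ k, β k * Z k` agrees on `(0, 1)` with the
quantile mixture `ω ↦ ∑ k, β k * f k ω`. -/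
theorem quantile_mixture_is_sum_of_rvs {K : ℕ} (hK : 1 ≤ K)
    (μ : Fin K → Measure ℝ) [∀ k, IsProbabilityMeasure (μ k)]
    (β : Fin K → ℝ) (hβ : ∀ k, 0 ≤ β k) :
    ∃ (Ω : Type) (mΩ : MeasurableSpace Ω) (ℙ : Measure Ω)
      (_ : IsProbabilityMeasure ℙ) (Z : Fin K → Ω → ℝ),
      (∀ k, Measurable (Z k)) ∧
      (∀ k, Measure.map (Z k) ℙ = μ k) ∧
      (∀ ω ∈ Set.Ioo (0 : ℝ) 1,
        quantile (Measure.map (fun x => ∑ k : Fin K, β k * Z k x) ℙ) ω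
          = ∑ k : Fin K, β k * quantile (μ k) ω) :=
  quantile_mixture_is_sum_of_rvs_general μ β hβ
end

section
/- Let (Ω, 𝔽, ℙ) be a probability space and let U : Ω → ℝ be a random variable whose law is the uniform distribution on the interval (0,1) (Lebesgue measure restricted to (0,1)). Let g : (0,1) → ℝ be monotone nondecreasing and left-continuous. Then the quantile function of the law of the random variable ω ↦ g(U(ω)) agrees with g on (0,1). (A nondecreasing left-continuous transform of a uniform random variable has that transform as its quantile function.) -/
open MeasureTheory

/-!
Lebesgue measure of `{u ∈ (0,1) | g u ≤ x}` is at least `ω` exactly when `g ω ≤ x`: if `g ω ≤ x`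
the set contains `(0, ω]` by monotonicity, and if `x < g ω` left-continuity keeps `g` above `x`
on some `(a, ω)` and monotonicity on `[ω, 1)`, so the set lies in `(0, a]`. Hence
`{x | ω ≤ F(x)} = [g ω, ∞)` for the law of `g ∘ U`, whose infimum is `g ω`.
-/

open Set

lemma quantile_eq_of_le_cdfOf_iff {μ : Measure ℝ} {ω y : ℝ}
    (h : ∀ x, ω ≤ cdfOf μ x ↔ y ≤ x) : quantile μ ω = y := by
  rw [quantile, show {x | ω ≤ cdfOf μ x} = Ici y from Set.ext h, csInf_Ici]

lemma cdfOf_map {α : Type*} [MeasurableSpace α] {μ : Measure α} {g : α → ℝ}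
    (hg : AEMeasurable g μ) (x : ℝ) : cdfOf (μ.map g) x = (μ (g ⁻¹' Iic x)).toReal := by
  rw [cdfOf, Measure.map_apply_of_aemeasurable hg measurableSet_Iic]

section UnitInterval

variable {g : ℝ → ℝ} {ω x : ℝ}

lemma MonotoneOn.ofReal_le_volume_preimage_Iic_inter_Ioo (hg : MonotoneOn g (Ioo 0 1))
    (hω : ω ∈ Ioo 0 1) (hx : g ω ≤ x) :
    ENNReal.ofReal ω ≤ volume (g ⁻¹' Iic x ∩ Ioo 0 1) := by
  have hsub : Ioc 0 ω ⊆ g ⁻¹' Iic x ∩ Ioo 0 1 := fun u hu =>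
    have hu' : u ∈ Ioo (0 : ℝ) 1 := ⟨hu.1, hu.2.trans_lt hω.2⟩
    ⟨(hg hu' hω hu.2).trans hx, hu'⟩
  simpa using measure_mono (μ := volume) hsub

lemma MonotoneOn.volume_preimage_Iic_inter_Ioo_lt_ofReal (hg : MonotoneOn g (Ioo 0 1))
    (hω : ω ∈ Ioo 0 1) (hlc : ContinuousWithinAt g (Iio ω) ω) (hx : x < g ω) :
    volume (g ⁻¹' Iic x ∩ Ioo 0 1) < ENNReal.ofReal ω := by
  obtain ⟨a, haω, ha⟩ :=
    mem_nhdsLT_iff_exists_Ioo_subset.1 (hlc.eventually (eventually_gt_nhds hx))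
  have hsub : g ⁻¹' Iic x ∩ Ioo 0 1 ⊆ Ioc 0 a := by
    rintro u ⟨hgu : g u ≤ x, hu⟩
    refine ⟨hu.1, not_lt.1 fun hau => ?_⟩
    rcases lt_or_ge u ω with huω | hωu
    · exact (ha ⟨hau, huω⟩).not_ge hgu
    · exact (hx.trans_le (hg hω hu hωu)).not_ge hgu
  calc volume (g ⁻¹' Iic x ∩ Ioo 0 1) ≤ volume (Ioc 0 a) := measure_mono hsub
    _ = ENNReal.ofReal a := by simp
    _ < ENNReal.ofReal ω := (ENNReal.ofReal_lt_ofReal_iff hω.1).2 haω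

theorem MonotoneOn.quantile_map_volume_restrict_Ioo (hg : MonotoneOn g (Ioo 0 1))
    (hω : ω ∈ Ioo 0 1) (hlc : ContinuousWithinAt g (Iio ω) ω) :
    quantile ((volume.restrict (Ioo 0 1)).map g) ω = g ω := by
  refine quantile_eq_of_le_cdfOf_iff fun x => ?_
  have hfin : volume (g ⁻¹' Iic x ∩ Ioo 0 1) ≠ ⊤ :=
    ((measure_mono inter_subset_right).trans_lt measure_Ioo_lt_top).ne
  rw [cdfOf_map (aemeasurable_restrict_of_monotoneOn measurableSet_Ioo hg),
    Measure.restrict_apply' measurableSet_Ioo, ← ENNReal.ofReal_le_iff_le_toReal hfin]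
  exact ⟨fun h => not_lt.1 fun hx =>
      (hg.volume_preimage_Iic_inter_Ioo_lt_ofReal hω hlc hx).not_ge h,
    hg.ofReal_le_volume_preimage_Iic_inter_Ioo hω⟩

end UnitInterval

theorem quantile_of_monotone_transform_of_uniform_general {Ω : Type*} [MeasurableSpace Ω]
    (ℙ : Measure Ω)
    (U : Ω → ℝ) (hU : Measurable U)
    (hUnif : Measure.map U ℙ = volume.restrict (Set.Ioo (0 : ℝ) 1))
    (g : ℝ → ℝ) (hmono : MonotoneOn g (Set.Ioo (0 : ℝ) 1))
    (hlc : ∀ x ∈ Set.Ioo (0 : ℝ) 1, ContinuousWithinAt g (Set.Iio x) x) :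
    ∀ ω ∈ Set.Ioo (0 : ℝ) 1,
      quantile (Measure.map (fun a => g (U a)) ℙ) ω = g ω := by
  intro ω hω
  have hg : AEMeasurable g (ℙ.map U) :=
    hUnif ▸ aemeasurable_restrict_of_monotoneOn measurableSet_Ioo hmono
  change quantile (ℙ.map (g ∘ U)) ω = g ω
  rw [← hg.map_map_of_aemeasurable hU.aemeasurable, hUnif]
  exact hmono.quantile_map_volume_restrict_Ioo hω (hlc ω hω)

/-- **A nondecreasing left-continuous transform of a uniform random variable has that
transform as its quantile function.** If `U` is uniformly distributed on `(0, 1)` and `g`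
is monotone nondecreasing and left-continuous on `(0, 1)`, then the quantile function of
the law of `g ∘ U` agrees with `g` on `(0, 1)`. -/
theorem quantile_of_monotone_transform_of_uniform {Ω : Type*} [MeasurableSpace Ω]
    (ℙ : Measure Ω) [IsProbabilityMeasure ℙ]
    (U : Ω → ℝ) (hU : Measurable U)
    (hUnif : Measure.map U ℙ = volume.restrict (Set.Ioo (0 : ℝ) 1))
    (g : ℝ → ℝ) (hmono : MonotoneOn g (Set.Ioo (0 : ℝ) 1))
    (hlc : ∀ x ∈ Set.Ioo (0 : ℝ) 1, ContinuousWithinAt g (Set.Iio x) x) :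
    ∀ ω ∈ Set.Ioo (0 : ℝ) 1,
      quantile (Measure.map (fun a => g (U a)) ℙ) ω = g ω :=
  quantile_of_monotone_transform_of_uniform_general ℙ U hU hUnif g hmono hlc
end
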